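/- arXiv:math/9909048 — 6 statements merged into one kernel-verified Lean document; each statement's English description precedes it below -/
import Mathlib

section
/- Let H be a complex Hilbert space, and let T, S : H → H be linear maps with x ↦ (Tx) ⊗ (Sx) continuous on the unit ball. If x_n → x with x ≠ 0, then (Tx_n) ⊗ (Sx_n) → (Tx) ⊗ (Sx); i.e., the map x ↦ (Tx) ⊗ (Sx) is continuous at every nonzero point of H. -/
/-- The rank-one operator `x ⊗ y : z ↦ ⟨z, y⟩ x`. -/
noncomputable def rankOne {H : Type*} [NormedAddCommGroup H] [InnerProductSpace ℂ H]
    (x y : H) : H →L[ℂ] H :=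
  (innerSL ℂ y).smulRight x

lemma rankOne_real_smul {H : Type*} [NormedAddCommGroup H] [InnerProductSpace ℂ H]
    (T S : H →ₗ[ℂ] H) (c : ℝ) (y : H) :
    rankOne (T (c • y)) (S (c • y)) = (c ^ 2) • rankOne (T y) (S y) := by
  ext z
  have h1 : T (c • y) = (c : ℂ) • T y := by
    rw [T.map_smul_of_tower c y]; exact (Complex.coe_smul c _).symm
  have h2 : S (c • y) = (c : ℂ) • S y := by
    rw [S.map_smul_of_tower c y]; exact (Complex.coe_smul c _).symm
  rw [h1, h2]
  simp only [rankOne, ContinuousLinearMap.coe_smul', Pi.smul_apply,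
    ContinuousLinearMap.smulRight_apply, innerSL_apply_apply, inner_smul_left, smul_smul]
  rw [show (c ^ 2 : ℝ) • ((inner ℂ (S y) z : ℂ) • T y) = ((c ^ 2 : ℝ) : ℂ) • (inner ℂ (S y) z : ℂ) • T y
      from (Complex.coe_smul _ _).symm, smul_smul]
  congr 1
  simp [Complex.conj_ofReal]
  ring

/-- If `T, S : H → H` are linear maps such that `x ↦ (Tx) ⊗ (Sx)` is continuous
(in operator norm) on the closed unit ball, then the map `x ↦ (Tx) ⊗ (Sx)` is
continuous at every nonzero point of `H`. -/
theorem stmt1 {H : Type*} [NormedAddCommGroup H] [InnerProductSpace ℂ H]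
    (T S : H →ₗ[ℂ] H)
    (hcont : ContinuousOn (fun x : H => rankOne (T x) (S x)) (Metric.closedBall 0 1)) :
    ∀ x : H, x ≠ 0 → ContinuousAt (fun x : H => rankOne (T x) (S x)) x := by
  intro x hx
  have hnx : ‖x‖ ≠ 0 := norm_ne_zero_iff.mpr hx
  set F : H → (H →L[ℂ] H) := fun y => rankOne (T y) (S y) with hF
  set g : H → H := fun y => ‖y‖⁻¹ • y with hg
  have hmaps : ∀ y : H, g y ∈ Metric.closedBall (0 : H) 1 := by
    intro y
    simp only [Metric.mem_closedBall, dist_zero_right, hg, norm_smul, norm_inv, norm_norm]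
    rcases eq_or_ne y 0 with rfl | hy
    · simp
    · rw [inv_mul_cancel₀ (norm_ne_zero_iff.mpr hy)]
  -- g is continuous at x
  have hgcont : ContinuousAt g x := by
    apply ContinuousAt.smul (f := fun y : H => ‖y‖⁻¹)
    · exact (continuous_norm.continuousAt).inv₀ hnx
    · exact continuousAt_id
  -- F ∘ g continuous at x
  have hFg : ContinuousAt (fun y => F (g y)) x := by
    have h1 : ContinuousWithinAt F (Metric.closedBall (0 : H) 1) (g x) :=
      hcont (g x) (hmaps x)
    have h2 : Filter.Tendsto g (nhds x) (nhdsWithin (g x) (Metric.closedBall (0 : H) 1)) := by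
      rw [tendsto_nhdsWithin_iff]
      exact ⟨hgcont, Filter.Eventually.of_forall hmaps⟩
    exact h1.tendsto.comp h2
  -- the candidate continuous function
  have hG : ContinuousAt (fun y => (‖y‖ ^ 2) • F (g y)) x := by
    exact ((continuous_norm.continuousAt).pow 2).smul hFg
  -- eventual equality near x
  have heq : (fun y => (‖y‖ ^ 2) • F (g y)) =ᶠ[nhds x] F := by
    have : ∀ᶠ y in nhds x, y ≠ 0 := by
      exact ContinuousAt.eventually_ne continuousAt_id hx
    filter_upwards [this] with y hy
    have hny : ‖y‖ ≠ 0 := norm_ne_zero_iff.mpr hy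
    have : F (g y) = (‖y‖⁻¹ ^ 2) • F y := rankOne_real_smul T S (‖y‖⁻¹) y
    rw [this, smul_smul]
    rw [show ‖y‖ ^ 2 * ‖y‖⁻¹ ^ 2 = 1 by field_simp]
    simp
  exact hG.congr heq
end

section
/- There exist unit vectors x, y, u, v in ℂ² (hence in any complex Hilbert space of dimension ≥ 2) with ⟨x,y⟩, ⟨x,v⟩, ⟨u,v⟩ all nonzero, such that ⟨y,x⟩⟨u,y⟩⟨v,u⟩⟨x,v⟩ ≠ ⟨x,y⟩⟨y,u⟩⟨u,v⟩⟨v,x⟩. -/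
/-!
Reversing the 4-cycle `x → y → u → v → x` conjugates the product of its inner products, so
the inequality says exactly that this product is not real. With `x, u` the standard basis
and `y = (3/5, 4/5)`, `v = (3/5, 4i/5)` the product is `(144/625) i`.
-/

open scoped InnerProductSpace ComplexConjugate

section CycleProduct

variable {𝕜 E : Type*} [RCLike 𝕜] [SeminormedAddCommGroup E] [InnerProductSpace 𝕜 E]

theorem inner_cycle_reverse_eq_conj (x y u v : E) :
    ⟪y, x⟫_𝕜 * ⟪u, y⟫_𝕜 * ⟪v, u⟫_𝕜 * ⟪x, v⟫_𝕜 =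
      conj (⟪x, y⟫_𝕜 * ⟪y, u⟫_𝕜 * ⟪u, v⟫_𝕜 * ⟪v, x⟫_𝕜) := by
  simp only [map_mul, inner_conj_symm]

end CycleProduct

section EuclideanPlane

variable {𝕜 : Type*} [RCLike 𝕜]

theorem EuclideanSpace.inner_vec₂ (a b c d : 𝕜) :
    ⟪!₂[a, b], !₂[c, d]⟫_𝕜 = conj a * c + conj b * d := by
  simp [PiLp.inner_apply, Fin.sum_univ_two, mul_comm]

theorem EuclideanSpace.norm_vec₂_eq_one {a b : 𝕜} (h : ‖a‖ ^ 2 + ‖b‖ ^ 2 = 1) :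
    ‖!₂[a, b]‖ = 1 := by
  simp [EuclideanSpace.norm_eq, Fin.sum_univ_two, h]

end EuclideanPlane

/-- There are unit vectors `x, y, u, v` in `ℂ²` with `⟨x,y⟩, ⟨x,v⟩, ⟨u,v⟩ ≠ 0`
such that `⟨y,x⟩⟨u,y⟩⟨v,u⟩⟨x,v⟩ ≠ ⟨x,y⟩⟨y,u⟩⟨u,v⟩⟨v,x⟩`.  Here the inner
product `⟨a,b⟩` of the paper is linear in the first variable, i.e. it is
Mathlib's `⟪b, a⟫_ℂ`. -/
theorem stmt4 :
    ∃ x y u v : EuclideanSpace ℂ (Fin 2),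
      ‖x‖ = 1 ∧ ‖y‖ = 1 ∧ ‖u‖ = 1 ∧ ‖v‖ = 1 ∧
      ⟪y, x⟫_ℂ ≠ 0 ∧ ⟪v, x⟫_ℂ ≠ 0 ∧ ⟪v, u⟫_ℂ ≠ 0 ∧
      ⟪x, y⟫_ℂ * ⟪y, u⟫_ℂ * ⟪u, v⟫_ℂ * ⟪v, x⟫_ℂ ≠
        ⟪y, x⟫_ℂ * ⟪u, y⟫_ℂ * ⟪v, u⟫_ℂ * ⟪x, v⟫_ℂ := by
  refine ⟨!₂[1, 0], !₂[3 / 5, 4 / 5], !₂[0, 1], !₂[3 / 5, 4 / 5 * Complex.I], ?_⟩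
  have h34 : ‖(3 / 5 : ℂ)‖ ^ 2 + ‖(4 / 5 : ℂ)‖ ^ 2 = 1 := by norm_num
  refine ⟨by simp [EuclideanSpace.norm_vec₂_eq_one],
    EuclideanSpace.norm_vec₂_eq_one h34, by simp [EuclideanSpace.norm_vec₂_eq_one],
    EuclideanSpace.norm_vec₂_eq_one (by simpa using h34), ?_, ?_, ?_, ?_⟩
  · norm_num [EuclideanSpace.inner_vec₂]
  · norm_num [EuclideanSpace.inner_vec₂]
  · simp [EuclideanSpace.inner_vec₂]
  · rw [inner_cycle_reverse_eq_conj, Ne, eq_comm, Complex.conj_eq_iff_im]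
    norm_num [EuclideanSpace.inner_vec₂, map_div₀, Complex.conj_ofNat]
end

section
/- Let φ : B(H) → B(H) be a continuous multiplicative map on an infinite-dimensional separable complex Hilbert space H that vanishes on all finite-rank operators, and suppose that whenever φ(I) ≠ 0 one has φ(P) ≠ 0 for all infinite-rank projections P. Then φ(I) = 0 and hence φ = 0. -/
open Submodule Set

noncomputable section Stmt15Aux

namespace Stmt15Aux

/-- The boolean sequences are uncountable (Cantor). -/
lemma not_countable_boolSeq : ¬ Countable (ℕ → Bool) := by
  classical
  intro h
  have hinj : Function.Injective (fun (s : Set ℕ) (n : ℕ) => decide (n ∈ s)) := by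
    intro s t hst
    ext n
    have := congrFun hst n
    simpa [decide_eq_decide] using this
  have : Countable (Set ℕ) := hinj.countable
  obtain ⟨f, hf⟩ := Countable.exists_injective_nat (Set ℕ)
  exact Function.cantor_injective f hf

/-- Encoded prefix of a boolean sequence. -/
def pref (x : ℕ → Bool) (n : ℕ) : ℕ :=
  Encodable.encode (List.ofFn fun i : Fin n => x i)

lemma pref_eq_iff {x y : ℕ → Bool} {n m : ℕ} :
    pref x n = pref y m → n = m ∧ ∀ i < n, x i = y i := by
  intro h
  have h2 : (List.ofFn fun i : Fin n => x i) = List.ofFn fun i : Fin m => y i :=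
    Encodable.encode_injective h
  have hnm : n = m := by
    have := congrArg List.length h2
    simpa using this
  subst hnm
  refine ⟨rfl, fun i hi => ?_⟩
  have := congrArg (fun l => l[i]?) h2
  simpa [List.getElem?_ofFn, hi] using this

lemma pref_injective (x : ℕ → Bool) : Function.Injective (pref x) :=
  fun _ _ h => (pref_eq_iff h).1

/-- The almost disjoint family of subsets of `ℕ`. -/
def adFam (x : ℕ → Bool) : Set ℕ := Set.range (pref x)

lemma adFam_infinite (x : ℕ → Bool) : (adFam x).Infinite :=
  Set.infinite_range_of_injective (pref_injective x)

lemma adFam_inter_finite {x y : ℕ → Bool} (hxy : x ≠ y) : (adFam x ∩ adFam y).Finite := by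
  obtain ⟨n₀, hn₀⟩ : ∃ n, x n ≠ y n := by
    by_contra h
    push_neg at h
    exact hxy (funext h)
  apply Set.Finite.subset ((Set.finite_Iic n₀).image (pref x))
  rintro k ⟨⟨n, rfl⟩, ⟨m, hm⟩⟩
  obtain ⟨hnm, hagree⟩ := pref_eq_iff hm.symm
  refine ⟨n, ?_, rfl⟩
  simp only [Set.mem_Iic]
  by_contra hn
  push_neg at hn
  exact hn₀ (hagree n₀ (by omega))

variable {H : Type*} [NormedAddCommGroup H] [InnerProductSpace ℂ H] [CompleteSpace H]

/-- Closed span of a subfamily of an orthonormal family. -/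
def V (f : ℕ → H) (S : Set ℕ) : Submodule ℂ H :=
  (span ℂ (f '' S)).topologicalClosure

instance (f : ℕ → H) (S : Set ℕ) : CompleteSpace (V f S) :=
  (Submodule.isClosed_topologicalClosure _).completeSpace_coe

/-- Orthogonal projection onto `V f S` as an operator on `H`. -/
def P (f : ℕ → H) (S : Set ℕ) : H →L[ℂ] H :=
  (V f S).subtypeL ∘L orthogonalProjection (V f S)

lemma P_apply_mem {f : ℕ → H} {S : Set ℕ} {v : H} (hv : v ∈ V f S) : P f S v = v :=
  Submodule.starProjection_eq_self_iff.2 hv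

lemma P_selfAdjoint (f : ℕ → H) (S : Set ℕ) : IsSelfAdjoint (P f S) :=
  isSelfAdjoint_starProjection _

lemma P_sq (f : ℕ → H) (S : Set ℕ) : P f S * P f S = P f S := by
  ext x
  exact P_apply_mem (Submodule.coe_mem _)

lemma range_P (f : ℕ → H) (S : Set ℕ) :
    LinearMap.range ((P f S : H →L[ℂ] H) : H →ₗ[ℂ] H) = V f S := by
  apply le_antisymm
  · rintro y ⟨x, rfl⟩
    exact Submodule.coe_mem _
  · intro v hv
    exact ⟨v, P_apply_mem hv⟩

omit [CompleteSpace H] in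
lemma mem_V {f : ℕ → H} {S : Set ℕ} {n : ℕ} (hn : n ∈ S) : f n ∈ V f S :=
  (span ℂ (f '' S)).le_topologicalClosure (subset_span ⟨n, hn, rfl⟩)

lemma P_apply_orth {f : ℕ → H} {S : Set ℕ} {v : H}
    (hv : ∀ n ∈ S, (inner ℂ (f n) v : ℂ) = 0) : P f S v = 0 := by
  have h1 : span ℂ (f '' S) ≤ (ℂ ∙ v)ᗮ := by
    rw [span_le]
    rintro _ ⟨n, hn, rfl⟩
    exact Submodule.mem_orthogonal_singleton_iff_inner_left.2 (hv n hn)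
  have h2 : V f S ≤ (ℂ ∙ v)ᗮ := by
    show (span ℂ (f '' S)).topologicalClosure ≤ (ℂ ∙ v)ᗮ
    exact Submodule.topologicalClosure_minimal _ h1 ((ℂ ∙ v).isClosed_orthogonal)
  have h3 : v ∈ (V f S)ᗮ := by
    rw [Submodule.mem_orthogonal]
    intro u hu
    exact Submodule.mem_orthogonal_singleton_iff_inner_left.1 (h2 hu)
  have : orthogonalProjection (V f S) v = 0 :=
    Submodule.orthogonalProjectionOnto_apply_of_mem_orthogonal h3
  simp [P, this]

section Basis

variable {w : Set H} (b : HilbertBasis w ℂ H) (g : ℕ ↪ w)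

open scoped Classical in
/-- Applying `P` to a basis vector. -/
lemma P_apply_basis (S : Set ℕ) (j : w) :
    P (fun n => b (g n)) S (b j) = if ∃ n ∈ S, g n = j then b j else 0 := by
  by_cases h : ∃ n ∈ S, g n = j
  · rw [if_pos h]
    obtain ⟨n, hn, rfl⟩ := h
    exact P_apply_mem (mem_V hn)
  · rw [if_neg h]
    apply P_apply_orth
    intro n hn
    push_neg at h
    exact b.orthonormal.2 (h n hn)

lemma P_mul (S T : Set ℕ) :
    P (fun n => b (g n)) S * P (fun n => b (g n)) T = P (fun n => b (g n)) (S ∩ T) := by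
  classical
  apply ContinuousLinearMap.ext_on
    (Submodule.dense_iff_topologicalClosure_eq_top.2 b.dense_span)
  rintro _ ⟨j, rfl⟩
  rw [ContinuousLinearMap.mul_apply, P_apply_basis, P_apply_basis]
  by_cases hT : ∃ n ∈ T, g n = j
  · rw [if_pos hT, P_apply_basis]
    by_cases hS : ∃ n ∈ S, g n = j
    · rw [if_pos hS]
      rw [if_pos]
      obtain ⟨n, hn, rfl⟩ := hS
      obtain ⟨m, hm, hmj⟩ := hT
      exact ⟨n, ⟨hn, by rwa [← g.injective hmj]⟩, rfl⟩
    · rw [if_neg hS, if_neg]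
      rintro ⟨n, hn, rfl⟩
      exact hS ⟨n, hn.1, rfl⟩
  · rw [if_neg hT, map_zero, if_neg]
    rintro ⟨n, hn, rfl⟩
    exact hT ⟨n, hn.2, rfl⟩

lemma rank_V_infinite {S : Set ℕ} (hS : S.Infinite) :
    Cardinal.aleph0 ≤ Module.rank ℂ (V (fun n => b (g n)) S) := by
  haveI : Infinite S := hS.to_subtype
  set f : ℕ → H := fun n => b (g n) with hf
  have horth : Orthonormal ℂ f := b.orthonormal.comp _ g.injective
  have hli : LinearIndependent ℂ (fun n : S => f n) :=
    horth.linearIndependent.comp Subtype.val Subtype.val_injective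
  have hmem : ∀ n : S, f n ∈ V f S := fun n => mem_V n.2
  have hli2 : LinearIndependent ℂ (fun n : S => (⟨f n, hmem n⟩ : V f S)) := by
    apply LinearIndependent.of_comp (V f S).subtype
    exact hli
  exact hli2.aleph0_le_rank

end Basis

lemma rank_V_finite {S : Set ℕ} (hS : S.Finite) (f : ℕ → H) :
    Module.rank ℂ (V f S) < Cardinal.aleph0 := by
  haveI : FiniteDimensional ℂ (span ℂ (f '' S)) :=
    FiniteDimensional.span_of_finite ℂ (hS.image f)
  have hcl : (span ℂ (f '' S)).topologicalClosure = span ℂ (f '' S) :=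
    IsClosed.submodule_topologicalClosure_eq (Submodule.closed_of_finiteDimensional _)
  have : V f S = span ℂ (f '' S) := hcl
  rw [this]
  exact Module.rank_lt_aleph0 ℂ _

end Stmt15Aux

end Stmt15Aux

/-- A continuous multiplicative map `φ : B(H) → B(H)` on an infinite-dimensional
separable complex Hilbert space which vanishes on all finite-rank operators and
satisfies `φ(P) ≠ 0` for every infinite-rank projection `P` whenever `φ(I) ≠ 0`,
must have `φ(I) = 0` and hence `φ = 0`. -/
theorem stmt15 {H : Type*} [NormedAddCommGroup H] [InnerProductSpace ℂ H]
    [CompleteSpace H] [TopologicalSpace.SeparableSpace H]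
    (hinf : ¬ FiniteDimensional ℂ H)
    (φ : (H →L[ℂ] H) → (H →L[ℂ] H)) (hcont : Continuous φ)
    (hmul : ∀ A B : H →L[ℂ] H, φ (A * B) = φ A * φ B)
    (hfin : ∀ A : H →L[ℂ] H,
      Module.rank ℂ (LinearMap.range (A : H →ₗ[ℂ] H)) < Cardinal.aleph0 → φ A = 0)
    (hproj : φ 1 ≠ 0 → ∀ P : H →L[ℂ] H, IsSelfAdjoint P → P * P = P →
      Cardinal.aleph0 ≤ Module.rank ℂ (LinearMap.range (P : H →ₗ[ℂ] H)) → φ P ≠ 0) :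
    φ 1 = 0 ∧ ∀ A : H →L[ℂ] H, φ A = 0 := by
  open Stmt15Aux in
  have key : φ 1 = 0 := by
    by_contra h1
    obtain ⟨w, b, hbw⟩ := exists_hilbertBasis ℂ H
    -- the basis index set is infinite
    have hw : w.Infinite := by
      by_contra hwf
      rw [Set.not_infinite] at hwf
      have hfd : FiniteDimensional ℂ (Submodule.span ℂ w) :=
        FiniteDimensional.span_of_finite ℂ hwf
      have h2 : (Submodule.span ℂ w).topologicalClosure = Submodule.span ℂ w :=
        IsClosed.submodule_topologicalClosure_eq (Submodule.closed_of_finiteDimensional _)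
      have h3 : (Submodule.span ℂ (Set.range ⇑b)).topologicalClosure = ⊤ := b.dense_span
      rw [hbw, Subtype.range_coe, h2] at h3
      rw [h3] at hfd
      exact hinf (Submodule.topEquiv.finiteDimensional)
    let g : ℕ ↪ w := Set.Infinite.natEmbedding w hw
    let f : ℕ → H := fun n => b (g n)
    let E : (ℕ → Bool) → (H →L[ℂ] H) := fun x => φ (Stmt15Aux.P f (adFam x))
    have hEne : ∀ x, E x ≠ 0 := fun x =>
      hproj h1 _ (P_selfAdjoint f _) (P_sq f _)
        (by rw [range_P]; exact rank_V_infinite b g (adFam_infinite x))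
    have hEsq : ∀ x, E x * E x = E x := fun x => by
      show φ _ * φ _ = φ _
      rw [← hmul, P_sq]
    have hEmul : ∀ x y, x ≠ y → E x * E y = 0 := fun x y hxy => by
      show φ _ * φ _ = 0
      rw [← hmul, P_mul]
      exact hfin _ (by rw [range_P]; exact rank_V_finite (adFam_inter_finite hxy) f)
    have hvx : ∀ x, ∃ v, E x v ≠ 0 := fun x => by
      by_contra h
      push_neg at h
      exact hEne x (ContinuousLinearMap.ext fun v => by simpa using h v)
    choose v hv using hvx
    let u : (ℕ → Bool) → H := fun x => ‖E x (v x)‖⁻¹ • E x (v x)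
    have hnorm : ∀ x, ‖u x‖ = 1 := fun x => by
      show ‖‖E x (v x)‖⁻¹ • E x (v x)‖ = 1
      rw [norm_smul, norm_inv, norm_norm,
        inv_mul_cancel₀ (norm_ne_zero_iff.2 (hv x))]
    have hEu : ∀ x, E x (u x) = u x := fun x => by
      show E x (‖E x (v x)‖⁻¹ • E x (v x)) = ‖E x (v x)‖⁻¹ • E x (v x)
      rw [ContinuousLinearMap.map_smul_of_tower]
      congr 1
      have := congrArg (fun T => T (v x)) (hEsq x)
      simpa [ContinuousLinearMap.mul_apply] using this
    have hEu0 : ∀ x y, x ≠ y → E x (u y) = 0 := fun x y hxy => by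
      show E x (‖E y (v y)‖⁻¹ • E y (v y)) = 0
      rw [ContinuousLinearMap.map_smul_of_tower]
      have := congrArg (fun T => T (v y)) (hEmul x y hxy)
      simp only [ContinuousLinearMap.mul_apply, ContinuousLinearMap.zero_apply] at this
      rw [this, smul_zero]
    have hsep : ∀ x y, x ≠ y → 1 ≤ ‖E x‖ * ‖u x - u y‖ := by
      intro x y hxy
      have heq : u x = E x (u x - u y) := by
        rw [map_sub, hEu x, hEu0 x y hxy, sub_zero]
      calc (1 : ℝ) = ‖u x‖ := (hnorm x).symm
        _ = ‖E x (u x - u y)‖ := by rw [← heq]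
        _ ≤ ‖E x‖ * ‖u x - u y‖ := ContinuousLinearMap.le_opNorm _ _
    have hC : ∀ N : ℕ, {x : ℕ → Bool | ‖E x‖ ≤ N + 1}.Countable := by
      intro N
      apply Set.PairwiseDisjoint.countable_of_isOpen
        (s := fun x => Metric.ball (u x) ((2 * ((N : ℝ) + 1))⁻¹))
      · intro x hx y hy hxy
        apply Metric.ball_disjoint_ball
        have hEx : (0 : ℝ) < ‖E x‖ := norm_pos_iff.2 (hEne x)
        have h1x : 1 ≤ ‖E x‖ * dist (u x) (u y) := by
          rw [dist_eq_norm]; exact hsep x y hxy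
        have hN : ‖E x‖ ≤ (N : ℝ) + 1 := hx
        have hNpos : (0 : ℝ) < (N : ℝ) + 1 := by positivity
        have hd : ((N : ℝ) + 1)⁻¹ ≤ dist (u x) (u y) := by
          rw [inv_le_iff_one_le_mul₀ hNpos]
          nlinarith [dist_nonneg (x := u x) (y := u y)]
        calc (2 * ((N : ℝ) + 1))⁻¹ + (2 * ((N : ℝ) + 1))⁻¹
            = ((N : ℝ) + 1)⁻¹ := by
              rw [← two_mul, mul_inv, ← mul_assoc, mul_inv_cancel₀ two_ne_zero, one_mul]
          _ ≤ dist (u x) (u y) := hd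
      · intro x _
        exact Metric.isOpen_ball
      · intro x _
        exact ⟨u x, Metric.mem_ball_self (by positivity)⟩
    have huniv : (Set.univ : Set (ℕ → Bool)).Countable := by
      have hU : (Set.univ : Set (ℕ → Bool)) = ⋃ N : ℕ, {x | ‖E x‖ ≤ N + 1} := by
        ext x
        simp only [Set.mem_univ, Set.mem_iUnion, Set.mem_setOf_eq, true_iff]
        exact ⟨⌈‖E x‖⌉₊, le_trans (Nat.le_ceil _) (by push_cast; linarith)⟩
      rw [hU]
      exact Set.countable_iUnion hC
    exact not_countable_boolSeq (Set.countable_univ_iff.mp huniv)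
  refine ⟨key, fun A => ?_⟩
  calc φ A = φ (A * 1) := by rw [mul_one]
    _ = φ A * φ 1 := hmul A 1
    _ = 0 := by rw [key, mul_zero]
end

section
/- Let ψ : F(H) → B(H) be a nonzero Jordan homomorphism on the finite-rank operators of a Hilbert space H of dimension ≥ 2, written as ψ = ψ₁ + ψ₂ with ψ₁ a homomorphism and ψ₂ an antihomomorphism with orthogonal ranges. If ψ maps some rank-one projection to a rank-one idempotent, then either ψ₁ = 0 or ψ₂ = 0; i.e., ψ is either a homomorphism or an antihomomorphism. -/
/-- `A` is a finite-rank operator. -/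
def IsFiniteRank {H : Type*} [NormedAddCommGroup H] [InnerProductSpace ℂ H]
    (A : H →L[ℂ] H) : Prop :=
  Module.rank ℂ (LinearMap.range (A : H →ₗ[ℂ] H)) < Cardinal.aleph0

section helpers
variable {H : Type*} [NormedAddCommGroup H] [InnerProductSpace ℂ H]

open scoped InnerProductSpace in
lemma rankOne_apply' (x y z : H) : rankOne x y z = ⟪y, z⟫_ℂ • x := rfl

lemma isFR_smulRight (f : H →L[ℂ] ℂ) (x : H) : IsFiniteRank (f.smulRight x) := by
  have hle : LinearMap.range ((f.smulRight x : H →L[ℂ] H) : H →ₗ[ℂ] H) ≤ ℂ ∙ x := by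
    rintro z ⟨w, rfl⟩
    exact Submodule.smul_mem _ _ (Submodule.mem_span_singleton_self x)
  refine lt_of_le_of_lt (Submodule.rank_mono hle) ?_
  refine lt_of_le_of_lt (rank_span_le {x}) ?_
  simp [Cardinal.one_lt_aleph0]

lemma isFR_rankOne (x y : H) : IsFiniteRank (rankOne x y) := isFR_smulRight _ _

lemma isFR_zero : IsFiniteRank (0 : H →L[ℂ] H) := by
  have : ((0 : H →L[ℂ] H) : H →ₗ[ℂ] H) = 0 := rfl
  simp only [IsFiniteRank, this, LinearMap.range_zero]
  simpa using Cardinal.aleph0_pos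

lemma isFR_add {A B : H →L[ℂ] H} (hA : IsFiniteRank A) (hB : IsFiniteRank B) :
    IsFiniteRank (A + B) := by
  have hle : LinearMap.range ((A + B : H →L[ℂ] H) : H →ₗ[ℂ] H) ≤
      LinearMap.range (A : H →ₗ[ℂ] H) ⊔ LinearMap.range (B : H →ₗ[ℂ] H) := by
    rintro z ⟨w, rfl⟩
    exact Submodule.mem_sup.2 ⟨A w, ⟨w, rfl⟩, B w, ⟨w, rfl⟩, rfl⟩
  refine lt_of_le_of_lt (Submodule.rank_mono hle) ?_
  exact lt_of_le_of_lt (Submodule.rank_add_le_rank_add_rank _ _) (Cardinal.add_lt_aleph0 hA hB)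

lemma isFR_mul_left (A : H →L[ℂ] H) {B : H →L[ℂ] H} (hA : IsFiniteRank A) :
    IsFiniteRank (A * B) := by
  have hle : LinearMap.range ((A * B : H →L[ℂ] H) : H →ₗ[ℂ] H) ≤
      LinearMap.range (A : H →ₗ[ℂ] H) := by
    rintro z ⟨w, rfl⟩; exact ⟨B w, rfl⟩
  exact lt_of_le_of_lt (Submodule.rank_mono hle) hA

lemma isFR_sum {ι : Type*} (T : ι → (H →L[ℂ] H)) (hT : ∀ i, IsFiniteRank (T i))
    (s : Finset ι) : IsFiniteRank (∑ i ∈ s, T i) := by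
  classical
  induction s using Finset.cons_induction with
  | empty => simpa using isFR_zero
  | cons i s hi ih => rw [Finset.sum_cons]; exact isFR_add (hT i) ih

lemma map_sum_of_add [CompleteSpace H] (φ : (H →L[ℂ] H) → (H →L[ℂ] H))
    (hadd : ∀ A B, IsFiniteRank A → IsFiniteRank B → φ (A + B) = φ A + φ B)
    {ι : Type*} (T : ι → (H →L[ℂ] H)) (hT : ∀ i, IsFiniteRank (T i)) (s : Finset ι) :
    φ (∑ i ∈ s, T i) = ∑ i ∈ s, φ (T i) := by
  classical
  have h0 : φ 0 = 0 := by
    have h := hadd 0 0 isFR_zero isFR_zero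
    rw [add_zero] at h
    exact add_eq_left.mp h.symm
  induction s using Finset.cons_induction with
  | empty => simpa using h0
  | cons i s hi ih =>
      rw [Finset.sum_cons, hadd _ _ (hT i) (isFR_sum T hT s), ih, Finset.sum_cons]

/-- Every finite-rank operator is a finite sum of `f.smulRight u` operators. -/
lemma exists_decomp [CompleteSpace H] {A : H →L[ℂ] H} (hA : IsFiniteRank A) :
    ∃ (n : ℕ) (u : Fin n → H) (f : Fin n → (H →L[ℂ] ℂ)),
      A = ∑ i, (f i).smulRight (u i) := by
  set V := LinearMap.range (A : H →ₗ[ℂ] H) with hV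
  haveI : Module.Finite ℂ V := Module.rank_lt_aleph0_iff.mp hA
  let b := Module.finBasis ℂ V
  have hmem : ∀ z, A z ∈ V := fun z => ⟨z, rfl⟩
  let g : H →L[ℂ] V := A.codRestrict V hmem
  refine ⟨Module.finrank ℂ V, fun i => (b i : H),
    fun i => (LinearMap.toContinuousLinearMap (b.coord i)).comp g, ?_⟩
  ext z
  have h1 : (g z : H) = A z := rfl
  have h2 : ∑ i, b.repr (g z) i • b i = g z := b.sum_repr (g z)
  have h3 : ((∑ i, b.repr (g z) i • b i : V) : H) = ∑ i, b.repr (g z) i • (b i : H) := by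
    push_cast; rfl
  calc A z = ((g z : V) : H) := rfl
    _ = ((∑ i, b.repr (g z) i • b i : V) : H) := by rw [h2]
    _ = ∑ i, b.repr (g z) i • (b i : H) := h3
    _ = _ := by
        simp only [ContinuousLinearMap.sum_apply, ContinuousLinearMap.smulRight_apply,
          ContinuousLinearMap.comp_apply, LinearMap.coe_toContinuousLinearMap',
          Module.Basis.coord_apply]

end helpers


/-- Let `ψ` be a nonzero Jordan homomorphism on the finite-rank operators `F(H)`
(`dim H ≥ 2`), written as `ψ = ψ₁ + ψ₂` with `ψ₁` a homomorphism and `ψ₂` an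
antihomomorphism with orthogonal ranges.  If `ψ` maps some rank-one projection
to a rank-one idempotent, then `ψ₁ = 0` or `ψ₂ = 0` on `F(H)`; i.e. `ψ` is
either a homomorphism or an antihomomorphism. -/
theorem stmt16 {H : Type*} [NormedAddCommGroup H] [InnerProductSpace ℂ H]
    [CompleteSpace H] (hdim : 2 ≤ Module.rank ℂ H)
    (ψ ψ₁ ψ₂ : (H →L[ℂ] H) → (H →L[ℂ] H))
    (hsum : ∀ A, IsFiniteRank A → ψ A = ψ₁ A + ψ₂ A)
    (hadd₁ : ∀ A B, IsFiniteRank A → IsFiniteRank B → ψ₁ (A + B) = ψ₁ A + ψ₁ B)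
    (hadd₂ : ∀ A B, IsFiniteRank A → IsFiniteRank B → ψ₂ (A + B) = ψ₂ A + ψ₂ B)
    (hmul₁ : ∀ A B, IsFiniteRank A → IsFiniteRank B → ψ₁ (A * B) = ψ₁ A * ψ₁ B)
    (hmul₂ : ∀ A B, IsFiniteRank A → IsFiniteRank B → ψ₂ (A * B) = ψ₂ B * ψ₂ A)
    (horth : ∀ A B, IsFiniteRank A → IsFiniteRank B →
      ψ₁ A * ψ₂ B = 0 ∧ ψ₂ B * ψ₁ A = 0)
    (hnonzero : ∃ A, IsFiniteRank A ∧ ψ A ≠ 0)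
    (hrkone : ∃ x : H, ‖x‖ = 1 ∧
      ψ (rankOne x x) * ψ (rankOne x x) = ψ (rankOne x x) ∧
      Module.rank ℂ (LinearMap.range ((ψ (rankOne x x)) : H →ₗ[ℂ] H)) = 1) :
    (∀ A, IsFiniteRank A → ψ₁ A = 0) ∨ (∀ A, IsFiniteRank A → ψ₂ A = 0) := by
  classical
  obtain ⟨x, hx, hidem, hrank⟩ := hrkone
  set P : H →L[ℂ] H := rankOne x x with hPdef
  have hxx : (inner ℂ x x : ℂ) = 1 := by
    rw [inner_self_eq_norm_sq_to_K, hx]; norm_num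
  have hP : IsFiniteRank P := isFR_rankOne x x
  have hPP : P * P = P := by
    ext z
    show P (P z) = P z
    simp only [hPdef, rankOne_apply', inner_smul_right, hxx, mul_one]
  have hψP : ψ P = ψ₁ P + ψ₂ P := hsum P hP
  have h1idem : ψ₁ P * ψ₁ P = ψ₁ P := by rw [← hmul₁ P P hP hP, hPP]
  have h2idem : ψ₂ P * ψ₂ P = ψ₂ P := by rw [← hmul₂ P P hP hP, hPP]
  have h12 : ψ₁ P * ψ₂ P = 0 := (horth P P hP hP).1
  have h21 : ψ₂ P * ψ₁ P = 0 := (horth P P hP hP).2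
  -- key dichotomy: ψ₁ P = 0 or ψ₂ P = 0
  have key : ψ₁ P = 0 ∨ ψ₂ P = 0 := by
    by_contra hcon
    push_neg at hcon
    obtain ⟨h1ne, h2ne⟩ := hcon
    obtain ⟨u, hu⟩ : ∃ u, ψ₁ P u ≠ 0 := by
      by_contra h; push_neg at h; exact h1ne (by ext z; simpa using h z)
    obtain ⟨v, hv⟩ : ∃ v, ψ₂ P v ≠ 0 := by
      by_contra h; push_neg at h; exact h2ne (by ext z; simpa using h z)
    -- both ψ₁ P u and ψ₂ P v lie in range of ψ P, which has rank 1
    have hmema : ψ₁ P u ∈ LinearMap.range ((ψ P) : H →ₗ[ℂ] H) := by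
      refine ⟨ψ₁ P u, ?_⟩
      show ψ P (ψ₁ P u) = ψ₁ P u
      have : ψ P (ψ₁ P u) = (ψ₁ P * ψ₁ P) u + (ψ₂ P * ψ₁ P) u := by
        rw [hψP]; rfl
      rw [this, h1idem, h21]; simp
    have hmemb : ψ₂ P v ∈ LinearMap.range ((ψ P) : H →ₗ[ℂ] H) := by
      refine ⟨ψ₂ P v, ?_⟩
      show ψ P (ψ₂ P v) = ψ₂ P v
      have : ψ P (ψ₂ P v) = (ψ₁ P * ψ₂ P) v + (ψ₂ P * ψ₂ P) v := by
        rw [hψP]; rfl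
      rw [this, h2idem, h12]; simp
    obtain ⟨v₀, hv₀⟩ := rank_le_one_iff.mp hrank.le
    obtain ⟨c₁, hc₁⟩ := hv₀ ⟨ψ₁ P u, hmema⟩
    obtain ⟨c₂, hc₂⟩ := hv₀ ⟨ψ₂ P v, hmemb⟩
    have hc₁' : c₁ • (v₀ : H) = ψ₁ P u := congrArg Subtype.val hc₁
    have hc₂' : c₂ • (v₀ : H) = ψ₂ P v := congrArg Subtype.val hc₂
    have hc₁ne : c₁ ≠ 0 := by
      rintro rfl; rw [zero_smul] at hc₁'; exact hu hc₁'.symm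
    -- apply ψ₂ P to both relations
    have e1 : ψ₂ P (ψ₁ P u) = 0 := by
      have : ψ₂ P (ψ₁ P u) = (ψ₂ P * ψ₁ P) u := rfl
      rw [this, h21]; rfl
    have e2 : ψ₂ P (ψ₂ P v) = ψ₂ P v := by
      have : ψ₂ P (ψ₂ P v) = (ψ₂ P * ψ₂ P) v := rfl
      rw [this, h2idem]
    have ev₀ : ψ₂ P (v₀ : H) = 0 := by
      have h := congrArg (fun w => ψ₂ P w) hc₁'
      simp only [map_smul] at h
      rw [e1] at h
      exact smul_eq_zero.mp h |>.resolve_left hc₁ne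
    have : ψ₂ P v = 0 := by
      have h := congrArg (fun w => ψ₂ P w) hc₂'
      simp only [map_smul, ev₀, smul_zero] at h
      rw [e2] at h
      exact h.symm
    exact hv this
  -- from vanishing on P, conclude vanishing everywhere
  rcases key with h0 | h0
  · left
    intro A hA
    obtain ⟨n, u, f, hdec⟩ := exists_decomp hA
    have hterm : ∀ i : Fin n,
        ψ₁ ((rankOne (u i) x) * (P * (f i).smulRight x)) = 0 := by
      intro i
      rw [hmul₁ _ _ (isFR_rankOne _ _) (isFR_mul_left P (isFR_smulRight _ _) ),
        hmul₁ _ _ hP (isFR_smulRight _ _), h0, zero_mul, mul_zero]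
    have hfact : ∀ i : Fin n,
        (rankOne (u i) x) * (P * (f i).smulRight x) = (f i).smulRight (u i) := by
      intro i
      ext z
      show rankOne (u i) x (P ((f i).smulRight x z)) = f i z • u i
      simp only [ContinuousLinearMap.smulRight_apply, hPdef, rankOne_apply',
        map_smul, inner_smul_right, hxx, mul_one, smul_smul, one_smul]
    rw [hdec, map_sum_of_add ψ₁ hadd₁ _ (fun i => isFR_smulRight _ _)]
    refine Finset.sum_eq_zero fun i _ => ?_
    rw [← hfact i]; exact hterm i
  · right
    intro A hA
    obtain ⟨n, u, f, hdec⟩ := exists_decomp hA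
    have hterm : ∀ i : Fin n,
        ψ₂ ((rankOne (u i) x) * (P * (f i).smulRight x)) = 0 := by
      intro i
      rw [hmul₂ _ _ (isFR_rankOne _ _) (isFR_mul_left P (isFR_smulRight _ _)),
        hmul₂ _ _ hP (isFR_smulRight _ _), h0, mul_zero, zero_mul]
    have hfact : ∀ i : Fin n,
        (rankOne (u i) x) * (P * (f i).smulRight x) = (f i).smulRight (u i) := by
      intro i
      ext z
      show rankOne (u i) x (P ((f i).smulRight x z)) = f i z • u i
      simp only [ContinuousLinearMap.smulRight_apply, hPdef, rankOne_apply',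
        map_smul, inner_smul_right, hxx, mul_one, smul_smul, one_smul]
    rw [hdec, map_sum_of_add ψ₂ hadd₂ _ (fun i => isFR_smulRight _ _)]
    refine Finset.sum_eq_zero fun i _ => ?_
    rw [← hfact i]; exact hterm i
end

section
/- Let H ≅ H ⊕ H be an infinite-dimensional separable Hilbert space. Define φ : P(H) → B(H ⊕ H) by φ(P) = P ⊕ 0 if P has infinite corank, and φ(P) = P ⊕ I if P has finite corank. Then φ is a continuous multiplicative map on the set of projections P(H). -/
/-!
Write `φ P = P ⊕ c P`, where `c P` is `I` or `0` according as `range (1 - P)` is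
finite-dimensional or not. For idempotents, `1 - P = (1 - P)(1 - PQ)`, `1 - Q = (1 - PQ)(1 - Q)`
and `1 - PQ = (1 - P) + P(1 - Q)`, so `PQ` has finite corank iff `P` and `Q` do, and
`c (PQ) = c P * c Q`. If `‖P - Q‖ < 1`, a vector fixed by `P` and killed by `Q` is fixed by
`P - Q`, hence zero; so `1 - P` is injective on `ker Q = range (1 - Q)`. Thus nearby idempotents
have finite corank together, `c` is locally constant on projections, and `φ` is continuous there.
-/

open scoped Classical

open LinearMap Topology

theorem finiteDimensional_range_one_sub_mul_iff {K V : Type*} [DivisionRing K] [AddCommGroup V]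
    [Module K V] {p q : Module.End K V} (hp : IsIdempotentElem p) (hq : IsIdempotentElem q) :
    FiniteDimensional K (range (1 - p * q)) ↔
      FiniteDimensional K (range (1 - p)) ∧ FiniteDimensional K (range (1 - q)) := by
  constructor
  · intro h
    have hp' : (1 - p) * (1 - p * q) = 1 - p := by
      rw [mul_sub, mul_one, sub_mul, one_mul, ← mul_assoc, hp.eq, sub_self, sub_zero]
    have hq' : (1 - p * q) * (1 - q) = 1 - q := by
      rw [mul_sub, mul_one, sub_mul, one_mul, mul_assoc, hq.eq, sub_sub_sub_cancel_right]
    refine ⟨?_, Submodule.finiteDimensional_of_le (S₂ := range (1 - p * q)) ?_⟩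
    · rw [← hp', Module.End.mul_eq_comp, range_comp]
      infer_instance
    · rw [← hq', Module.End.mul_eq_comp]
      exact range_comp_le_range _ _
  · rintro ⟨_, _⟩
    have h : 1 - p * q = (1 - p) + p * (1 - q) := by noncomm_ring
    refine Submodule.finiteDimensional_of_le (S₂ := range (1 - p) ⊔ (range (1 - q)).map p) ?_
    rw [h, Module.End.mul_eq_comp, ← range_comp]
    exact range_add_le _ _

namespace ContinuousLinearMap

theorem prodMap_mul {R M₁ M₂ : Type*} [Semiring R] [TopologicalSpace M₁] [AddCommMonoid M₁]
    [Module R M₁] [TopologicalSpace M₂] [AddCommMonoid M₂] [Module R M₂]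
    (f₁ g₁ : M₁ →L[R] M₁) (f₂ g₂ : M₂ →L[R] M₂) :
    f₁.prodMap f₂ * g₁.prodMap g₂ = (f₁ * g₁).prodMap (f₂ * g₂) :=
  rfl

variable {𝕜 E : Type*} [NontriviallyNormedField 𝕜] [NormedAddCommGroup E] [NormedSpace 𝕜 E]

theorem eq_zero_of_norm_sub_lt_one {p q : E →L[𝕜] E} (h : ‖p - q‖ < 1) {x : E}
    (hp : p x = x) (hq : q x = 0) : x = 0 := by
  have : ‖x‖ ≤ ‖p - q‖ * ‖x‖ := by
    simpa [hp, hq] using (p - q).le_opNorm x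
  exact norm_le_zero_iff.mp (by nlinarith [norm_nonneg x])

theorem finiteDimensional_range_one_sub_of_norm_sub_lt_one {p q : E →L[𝕜] E}
    (hq : IsIdempotentElem q) (h : ‖p - q‖ < 1)
    [FiniteDimensional 𝕜 (range (1 - (p : E →ₗ[𝕜] E)))] :
    FiniteDimensional 𝕜 (range (1 - (q : E →ₗ[𝕜] E))) := by
  rw [← (IsIdempotentElem.toLinearMap hq).ker_eq_range_one_sub]
  let g := (1 - (p : E →ₗ[𝕜] E)).domRestrict (ker (q : E →ₗ[𝕜] E))
  have hg : Function.Injective g := by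
    rw [← LinearMap.ker_eq_bot, LinearMap.ker_eq_bot']
    intro x hx
    exact Subtype.ext <| eq_zero_of_norm_sub_lt_one h (sub_eq_zero.mp hx).symm x.2
  have : FiniteDimensional 𝕜 (range g) :=
    Submodule.finiteDimensional_of_le (range_domRestrict_le_range _ _)
  exact (LinearEquiv.ofInjective g hg).symm.finiteDimensional

theorem eventually_finiteDimensional_range_one_sub_iff {p : E →L[𝕜] E}
    (hp : IsIdempotentElem p) :
    ∀ᶠ (q : E →L[𝕜] E) in 𝓝[{q | IsIdempotentElem q}] p,
      FiniteDimensional 𝕜 (range (1 - (q : E →ₗ[𝕜] E))) ↔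
        FiniteDimensional 𝕜 (range (1 - (p : E →ₗ[𝕜] E))) := by
  filter_upwards [self_mem_nhdsWithin,
    mem_nhdsWithin_of_mem_nhds (Metric.ball_mem_nhds p one_pos)] with q hq hqp
  rw [Metric.mem_ball, dist_eq_norm] at hqp
  exact ⟨fun _ => finiteDimensional_range_one_sub_of_norm_sub_lt_one hp hqp,
    fun _ => finiteDimensional_range_one_sub_of_norm_sub_lt_one hq (norm_sub_rev q p ▸ hqp)⟩

end ContinuousLinearMap

theorem stmt17_general {H : Type*} [NormedAddCommGroup H] [InnerProductSpace ℂ H]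
    [CompleteSpace H]
    (φ : (H →L[ℂ] H) → ((H × H) →L[ℂ] (H × H)))
    (hφ : ∀ P : H →L[ℂ] H, φ P =
      if Module.rank ℂ (LinearMap.range ((1 - P) : H →ₗ[ℂ] H)) < Cardinal.aleph0
      then P.prodMap 1 else P.prodMap 0) :
    ContinuousOn φ {P : H →L[ℂ] H | IsSelfAdjoint P ∧ P * P = P} ∧
    (∀ P Q : H →L[ℂ] H,
      (IsSelfAdjoint P ∧ P * P = P) → (IsSelfAdjoint Q ∧ Q * Q = Q) →
      (IsSelfAdjoint (P * Q) ∧ (P * Q) * (P * Q) = P * Q) →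
      φ (P * Q) = φ P * φ Q) := by
  have hφ' : ∀ P : H →L[ℂ] H, φ P = P.prodMap
      (if FiniteDimensional ℂ (range (1 - (P : H →ₗ[ℂ] H))) then 1 else 0) := by
    intro P
    rw [hφ, ← apply_ite]
    simp only [Module.rank_lt_aleph0_iff]
  refine ⟨?_, fun P Q hP hQ _ => ?_⟩
  · refine (ContinuousOn.prod_mapL ℂ continuousOn_id fun P hP => ?_).congr fun P _ => hφ' P
    refine continuousWithinAt_const.congr_of_eventuallyEq ?_ rfl
    filter_upwards [nhdsWithin_mono _ (fun _ h => h.2)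
      (ContinuousLinearMap.eventually_finiteDimensional_range_one_sub_iff hP.2)] with Q hQ
    simp only [hQ]
  · rw [hφ', hφ', hφ', ContinuousLinearMap.prodMap_mul, ite_zero_mul_ite_zero, one_mul,
      ContinuousLinearMap.toLinearMap_mul, finiteDimensional_range_one_sub_mul_iff
        (ContinuousLinearMap.IsIdempotentElem.toLinearMap hP.2)
        (ContinuousLinearMap.IsIdempotentElem.toLinearMap hQ.2)]
    split_ifs <;> rfl

/-- On an infinite-dimensional separable Hilbert space `H ≅ H ⊕ H`, the map
`φ` on projections defined by `φ(P) = P ⊕ 0` if `P` has infinite corank and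
`φ(P) = P ⊕ I` if `P` has finite corank is a continuous multiplicative map on
the set of projections `P(H)` (the corank of `P` being the rank of `I − P`). -/
theorem stmt17 {H : Type*} [NormedAddCommGroup H] [InnerProductSpace ℂ H]
    [CompleteSpace H] [TopologicalSpace.SeparableSpace H]
    (hinf : ¬ FiniteDimensional ℂ H)
    (φ : (H →L[ℂ] H) → ((H × H) →L[ℂ] (H × H)))
    (hφ : ∀ P : H →L[ℂ] H, φ P =
      if Module.rank ℂ (LinearMap.range ((1 - P) : H →ₗ[ℂ] H)) < Cardinal.aleph0
      then P.prodMap 1 else P.prodMap 0) :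
    ContinuousOn φ {P : H →L[ℂ] H | IsSelfAdjoint P ∧ P * P = P} ∧
    (∀ P Q : H →L[ℂ] H,
      (IsSelfAdjoint P ∧ P * P = P) → (IsSelfAdjoint Q ∧ Q * Q = Q) →
      (IsSelfAdjoint (P * Q) ∧ (P * Q) * (P * Q) = P * Q) →
      φ (P * Q) = φ P * φ Q) :=
  stmt17_general φ hφ
end

section
/- Let φ : B(H) → B(H) be a continuous multiplicative map on B(H) with φ(I) = I that preserves the rank of projections (rank φ(P) = rank P for all finite-rank projections P, interpreting via orthogonal complements for corank). Suppose φ sends rank-one operators A to operators of the form φ(λA) = f(λ)φ(A) for a function f : ℂ → ℂ independent of A. Then f is a continuous multiplicative function with f(1) = 1, and f is additive, hence f is the identity or conjugation. -/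
open scoped InnerProductSpace

section Aux
variable {H : Type*} [NormedAddCommGroup H] [InnerProductSpace ℂ H]

local notation "⟪" x ", " y "⟫" => @inner ℂ _ _ x y

/-- rank one operator `u ↦ ⟪x,u⟫ • y`. -/
noncomputable def rk1 (x y : H) : H →L[ℂ] H := (innerSL ℂ x).smulRight y

lemma rk1_apply (x y u : H) : rk1 x y u = ⟪x, u⟫ • y := rfl

lemma rk1_mul (a b c d : H) : rk1 a b * rk1 c d = ⟪a, d⟫ • rk1 c b := by
  ext u
  simp [rk1_apply, ContinuousLinearMap.mul_apply, inner_smul_right, smul_smul, mul_comm]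

lemma rk1_add_left (x y z : H) : rk1 (x + y) z = rk1 x z + rk1 y z := by
  ext u; simp [rk1_apply, inner_add_left, add_smul]

lemma rk1_add_right (x y z : H) : rk1 x (y + z) = rk1 x y + rk1 x z := by
  ext u; simp [rk1_apply, smul_add]

lemma rk1_smul_right (c : ℂ) (x y : H) : rk1 x (c • y) = c • rk1 x y := by
  ext u; simp [rk1_apply, smul_smul, mul_comm]

lemma rk1_range {x : H} (hx : x ≠ 0) (y : H) :
    LinearMap.range ((rk1 x y : H →L[ℂ] H) : H →ₗ[ℂ] H) = ℂ ∙ y := by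
  apply le_antisymm
  · rintro _ ⟨u, rfl⟩
    exact Submodule.smul_mem _ _ (Submodule.mem_span_singleton_self y)
  · rw [Submodule.span_singleton_le_iff_mem]
    refine ⟨(⟪x, x⟫)⁻¹ • x, ?_⟩
    have h0 : ⟪x, x⟫ ≠ 0 := inner_self_ne_zero.mpr hx
    simp only [ContinuousLinearMap.coe_coe]
    rw [rk1_apply, inner_smul_right]
    rw [inv_mul_cancel₀ h0, one_smul]

lemma rk1_rank {x y : H} (hx : x ≠ 0) (hy : y ≠ 0) :
    Module.rank ℂ (LinearMap.range ((rk1 x y : H →L[ℂ] H) : H →ₗ[ℂ] H)) = 1 := by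
  rw [rk1_range hx y, ← Module.finrank_eq_rank, finrank_span_singleton hy, Nat.cast_one]

lemma rk1_isSelfAdjoint [CompleteSpace H] (x : H) : IsSelfAdjoint (rk1 x x) := by
  rw [ContinuousLinearMap.isSelfAdjoint_iff_isSymmetric]
  intro u v
  simp only [ContinuousLinearMap.coe_coe, rk1_apply, inner_smul_left, inner_smul_right,
    inner_conj_symm]
  ring

lemma range_coe_add (A B : H →L[ℂ] H) (hA : A * A = A) (hB : B * B = B)
    (hAB : A * B = 0) (hBA : B * A = 0) :
    LinearMap.range ((A + B : H →L[ℂ] H) : H →ₗ[ℂ] H) =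
      LinearMap.range (A : H →ₗ[ℂ] H) ⊔ LinearMap.range (B : H →ₗ[ℂ] H) := by
  apply le_antisymm
  · rintro _ ⟨u, rfl⟩
    simp only [ContinuousLinearMap.coe_coe, ContinuousLinearMap.add_apply]
    exact Submodule.add_mem_sup (LinearMap.mem_range_self _ u) (LinearMap.mem_range_self _ u)
  · rw [sup_le_iff]
    constructor
    · rintro _ ⟨u, rfl⟩
      refine ⟨A u, ?_⟩
      have h1 : A (A u) = A u := by
        conv_rhs => rw [← hA]
        simp [ContinuousLinearMap.mul_apply]
      have h2 : B (A u) = 0 := by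
        have := congrArg (fun T : H →L[ℂ] H => T u) hBA
        simpa [ContinuousLinearMap.mul_apply] using this
      simp [ContinuousLinearMap.add_apply, h1, h2]
    · rintro _ ⟨u, rfl⟩
      refine ⟨B u, ?_⟩
      have h1 : B (B u) = B u := by
        conv_rhs => rw [← hB]
        simp [ContinuousLinearMap.mul_apply]
      have h2 : A (B u) = 0 := by
        have := congrArg (fun T : H →L[ℂ] H => T u) hAB
        simpa [ContinuousLinearMap.mul_apply] using this
      simp [ContinuousLinearMap.add_apply, h1, h2]

lemma range_inf_bot (A B : H →L[ℂ] H) (hA : A * A = A) (hAB : A * B = 0) :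
    LinearMap.range (A : H →ₗ[ℂ] H) ⊓ LinearMap.range (B : H →ₗ[ℂ] H) = ⊥ := by
  rw [eq_bot_iff]
  rintro v ⟨⟨a, ha⟩, ⟨b, hb⟩⟩
  simp only [ContinuousLinearMap.coe_coe] at ha hb
  have h1 : A v = v := by
    rw [← ha]
    have := congrArg (fun T : H →L[ℂ] H => T a) hA
    simpa [ContinuousLinearMap.mul_apply] using this
  have h2 : A v = 0 := by
    rw [← hb]
    have := congrArg (fun T : H →L[ℂ] H => T b) hAB
    simpa [ContinuousLinearMap.mul_apply] using this
  have : v = 0 := by rw [← h1, h2]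
  simp [this]

lemma rank_range_add (A B : H →L[ℂ] H) (hA : A * A = A) (hB : B * B = B)
    (hAB : A * B = 0) (hBA : B * A = 0) :
    Module.rank ℂ (LinearMap.range ((A + B : H →L[ℂ] H) : H →ₗ[ℂ] H)) =
      Module.rank ℂ (LinearMap.range (A : H →ₗ[ℂ] H)) +
        Module.rank ℂ (LinearMap.range (B : H →ₗ[ℂ] H)) := by
  have h := Submodule.rank_sup_add_rank_inf_eq (LinearMap.range (A : H →ₗ[ℂ] H))
    (LinearMap.range (B : H →ₗ[ℂ] H))
  rw [range_inf_bot A B hA hAB, rank_bot, add_zero] at h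
  rw [range_coe_add A B hA hB hAB hBA, h]

lemma eq_zero_of_rank_range_eq_zero {T : H →L[ℂ] H}
    (h : Module.rank ℂ (LinearMap.range (T : H →ₗ[ℂ] H)) = 0) : T = 0 := by
  have hb : LinearMap.range (T : H →ₗ[ℂ] H) = ⊥ := Submodule.rank_eq_zero.mp h
  rw [LinearMap.range_eq_bot] at hb
  ext u
  have := LinearMap.congr_fun hb u
  simpa using this

lemma rank_range_zero : Module.rank ℂ (LinearMap.range ((0 : H →L[ℂ] H) : H →ₗ[ℂ] H)) = 0 := by
  have : ((0 : H →L[ℂ] H) : H →ₗ[ℂ] H) = 0 := rfl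
  rw [this, LinearMap.range_zero, rank_bot]

lemma stmt19_smul_cancel {α β : ℂ} {T : H →L[ℂ] H} (h : α • T = β • T) (hT : T ≠ 0) : α = β := by
  by_contra hne
  have h0 : (α - β) • T = 0 := by rw [sub_smul, h, sub_self]
  rcases smul_eq_zero.mp h0 with h' | h'
  · exact hne (sub_eq_zero.mp h')
  · exact hT h'

/-- existence of two orthonormal vectors when the rank is at least 3 -/
lemma exists_orthonormal_pair [CompleteSpace H] (hdim : 3 ≤ Module.rank ℂ H) :
    ∃ x y : H, ⟪x, x⟫ = 1 ∧ ⟪y, y⟫ = 1 ∧ ⟪x, y⟫ = 0 ∧ ⟪y, x⟫ = 0 := by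
  have hnt : Nontrivial H := by
    refine rank_pos_iff_nontrivial.mp (lt_of_lt_of_le ?_ hdim)
    norm_num
  obtain ⟨x0, hx0⟩ := exists_ne (0 : H)
  set K : Submodule ℂ H := ℂ ∙ x0 with hK
  have hKne : Kᗮ ≠ ⊥ := by
    intro h
    rw [Submodule.orthogonal_eq_bot_iff] at h
    have h1 : Module.rank ℂ K = Module.rank ℂ H := by rw [h]; exact rank_top ℂ H
    have h2 : Module.rank ℂ K = 1 := by
      rw [hK, ← Module.finrank_eq_rank, finrank_span_singleton hx0, Nat.cast_one]
    rw [h2] at h1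
    rw [← h1] at hdim
    norm_num at hdim
  obtain ⟨y0, hy0K, hy0⟩ := (Submodule.ne_bot_iff Kᗮ).mp hKne
  have hxy0 : ⟪x0, y0⟫ = 0 :=
    (Submodule.mem_orthogonal K y0).mp hy0K x0 (Submodule.mem_span_singleton_self x0)
  have hyx0 : ⟪y0, x0⟫ = 0 := by
    rw [← inner_conj_symm y0 x0, hxy0, map_zero]
  refine ⟨(‖x0‖ : ℂ)⁻¹ • x0, (‖y0‖ : ℂ)⁻¹ • y0, ?_, ?_, ?_, ?_⟩
  · rw [inner_smul_left, inner_smul_right, inner_self_eq_norm_sq_to_K]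
    have h0 : ‖x0‖ ≠ 0 := norm_ne_zero_iff.mpr hx0
    have h' : (‖x0‖ : ℂ) ≠ 0 := Complex.ofReal_ne_zero.mpr h0
    rw [starRingEnd_apply, star_inv₀, Complex.star_def, Complex.conj_ofReal]
    field_simp
    rfl
  · rw [inner_smul_left, inner_smul_right, inner_self_eq_norm_sq_to_K]
    have h0 : ‖y0‖ ≠ 0 := norm_ne_zero_iff.mpr hy0
    have h' : (‖y0‖ : ℂ) ≠ 0 := Complex.ofReal_ne_zero.mpr h0
    rw [starRingEnd_apply, star_inv₀, Complex.star_def, Complex.conj_ofReal]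
    field_simp
    rfl
  · rw [inner_smul_left, inner_smul_right, hxy0]; ring
  · rw [inner_smul_left, inner_smul_right, hyx0]; ring

end Aux

local notation "⟪" x ", " y "⟫" => @inner ℂ _ _ x y

/-- Let `φ : B(H) → B(H)` (`H` separable complex Hilbert, `dim H ≥ 3`) be a
continuous multiplicative map with `φ(I) = I` preserving the rank of
finite-rank projections, and suppose `φ(λA) = f(λ)φ(A)` for every rank-one
operator `A` and scalar `λ`, where `f : ℂ → ℂ` is independent of `A`.  Then `f`
is a continuous multiplicative function with `f(1) = 1`, `f` is additive, and
hence `f` is the identity or complex conjugation. -/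
theorem stmt19 {H : Type*} [NormedAddCommGroup H] [InnerProductSpace ℂ H]
    [CompleteSpace H] [TopologicalSpace.SeparableSpace H]
    (hdim : 3 ≤ Module.rank ℂ H)
    (φ : (H →L[ℂ] H) → (H →L[ℂ] H)) (hcont : Continuous φ)
    (hmul : ∀ A B : H →L[ℂ] H, φ (A * B) = φ A * φ B)
    (hone : φ 1 = 1)
    (hrank : ∀ P : H →L[ℂ] H, IsSelfAdjoint P → P * P = P →
      Module.rank ℂ (LinearMap.range (P : H →ₗ[ℂ] H)) < Cardinal.aleph0 →
      Module.rank ℂ (LinearMap.range ((φ P) : H →ₗ[ℂ] H)) =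
        Module.rank ℂ (LinearMap.range (P : H →ₗ[ℂ] H)))
    (f : ℂ → ℂ)
    (hf : ∀ A : H →L[ℂ] H, Module.rank ℂ (LinearMap.range (A : H →ₗ[ℂ] H)) = 1 →
      ∀ lam : ℂ, φ (lam • A) = f lam • φ A) :
    Continuous f ∧ (∀ a b : ℂ, f (a * b) = f a * f b) ∧ f 1 = 1 ∧
    (∀ a b : ℂ, f (a + b) = f a + f b) ∧
    ((∀ z : ℂ, f z = z) ∨ (∀ z : ℂ, f z = starRingEnd ℂ z)) := by
  classical
  obtain ⟨x, y, hxx, hyy, hxy, hyx⟩ := exists_orthonormal_pair hdim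
  have hx0 : x ≠ 0 := by
    intro h; rw [h, inner_zero_left] at hxx; exact one_ne_zero hxx.symm
  have hy0 : y ≠ 0 := by
    intro h; rw [h, inner_zero_left] at hyy; exact one_ne_zero hyy.symm
  set P : H →L[ℂ] H := rk1 x x with hPdef
  set Q : H →L[ℂ] H := rk1 y y with hQdef
  set w : H := x + y with hwdef
  have hxw : ⟪x, w⟫ = 1 := by rw [hwdef, inner_add_right, hxx, hxy, add_zero]
  have hyw : ⟪y, w⟫ = 1 := by rw [hwdef, inner_add_right, hyx, hyy, zero_add]
  have hw0 : w ≠ 0 := by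
    intro h; rw [h, inner_zero_right] at hxw; exact one_ne_zero hxw.symm
  set v : H := (2:ℂ)⁻¹ • w with hvdef
  have hv0 : v ≠ 0 := smul_ne_zero (by norm_num) hw0
  have hxv : ⟪x, v⟫ = (2:ℂ)⁻¹ := by rw [hvdef, inner_smul_right, hxw, mul_one]
  have hyv : ⟪y, v⟫ = (2:ℂ)⁻¹ := by rw [hvdef, inner_smul_right, hyw, mul_one]
  have hwx : ⟪w, x⟫ = 1 := by rw [hwdef, inner_add_left, hxx, hyx, add_zero]
  have hwy : ⟪w, y⟫ = 1 := by rw [hwdef, inner_add_left, hxy, hyy, zero_add]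
  have hww : ⟪w, w⟫ = 2 := by
    rw [hwdef, inner_add_left, inner_add_right, inner_add_right, hxx, hxy, hyx, hyy]; norm_num
  have hwv : ⟪w, v⟫ = 1 := by rw [hvdef, inner_smul_right, hww]; norm_num
  set R : H →L[ℂ] H := rk1 w v with hRdef
  -- basic products
  have hPP : P * P = P := by rw [hPdef, rk1_mul, hxx, one_smul]
  have hQQ : Q * Q = Q := by rw [hQdef, rk1_mul, hyy, one_smul]
  have hPQ : P * Q = 0 := by rw [hPdef, hQdef, rk1_mul, hxy, zero_smul]
  have hQP : Q * P = 0 := by rw [hPdef, hQdef, rk1_mul, hyx, zero_smul]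
  have hRR : R * R = R := by rw [hRdef, rk1_mul, hwv, one_smul]
  have hRP : R * P = rk1 x v := by rw [hRdef, hPdef, rk1_mul, hwx, one_smul]
  have hRQ : R * Q = rk1 y v := by rw [hRdef, hQdef, rk1_mul, hwy, one_smul]
  have hPR : P * R = (2:ℂ)⁻¹ • rk1 w x := by rw [hPdef, hRdef, rk1_mul, hxv]
  have hQR : Q * R = (2:ℂ)⁻¹ • rk1 w y := by rw [hQdef, hRdef, rk1_mul, hyv]
  have hPwx : P * rk1 w x = rk1 w x := by rw [hPdef, rk1_mul, hxx, one_smul]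
  have hQwx : Q * rk1 w x = 0 := by rw [hQdef, rk1_mul, hyx, zero_smul]
  have hPwy : P * rk1 w y = 0 := by rw [hPdef, rk1_mul, hxy, zero_smul]
  have hQwy : Q * rk1 w y = rk1 w y := by rw [hQdef, rk1_mul, hyy, one_smul]
  have hRwx : R * rk1 w x = R := by rw [hRdef, rk1_mul, hwx, one_smul]
  have hRwy : R * rk1 w y = R := by rw [hRdef, rk1_mul, hwy, one_smul]
  have hPQR : (P + Q) * R = R := by
    rw [add_mul, hPR, hQR, ← smul_add, ← rk1_add_right, ← hwdef, ← rk1_smul_right, ← hvdef,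
      ← hRdef]
  have hPQPQ : (P + Q) * (P + Q) = P + Q := by
    rw [mul_add, add_mul, add_mul, hPP, hPQ, hQP, hQQ, add_zero, zero_add]
  have hPQP : (P + Q) * P = P := by rw [add_mul, hPP, hQP, add_zero]
  have hPQQ : (P + Q) * Q = Q := by rw [add_mul, hPQ, hQQ, zero_add]
  have hPPQ : P * (P + Q) = P := by rw [mul_add, hPP, hPQ, add_zero]
  have hQPQ : Q * (P + Q) = Q := by rw [mul_add, hQP, hQQ, zero_add]
  -- self-adjointness
  have hPsa : IsSelfAdjoint P := by rw [hPdef]; exact rk1_isSelfAdjoint x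
  have hQsa : IsSelfAdjoint Q := by rw [hQdef]; exact rk1_isSelfAdjoint y
  have hPQsa : IsSelfAdjoint (P + Q) := hPsa.add hQsa
  have hRsa : IsSelfAdjoint R := by
    have h2 : IsSelfAdjoint ((2:ℂ)⁻¹) := by rw [isSelfAdjoint_iff]; simp
    rw [hRdef, hvdef, rk1_smul_right]
    exact h2.smul (rk1_isSelfAdjoint w)
  -- ranks
  have hPrank : Module.rank ℂ (LinearMap.range (P : H →ₗ[ℂ] H)) = 1 := by
    rw [hPdef]; exact rk1_rank hx0 hx0
  have hQrank : Module.rank ℂ (LinearMap.range (Q : H →ₗ[ℂ] H)) = 1 := by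
    rw [hQdef]; exact rk1_rank hy0 hy0
  have hRrank : Module.rank ℂ (LinearMap.range (R : H →ₗ[ℂ] H)) = 1 := by
    rw [hRdef]; exact rk1_rank hw0 hv0
  have hPQrank : Module.rank ℂ (LinearMap.range ((P + Q : H →L[ℂ] H) : H →ₗ[ℂ] H)) = 1 + 1 := by
    rw [rank_range_add P Q hPP hQQ hPQ hQP, hPrank, hQrank]
  -- φ basics
  have hphi0 : φ 0 = 0 := by
    have hsa : IsSelfAdjoint (0 : H →L[ℂ] H) := by rw [isSelfAdjoint_iff, star_zero]
    have h := hrank 0 hsa (by rw [mul_zero]) (by rw [rank_range_zero]; exact Cardinal.aleph0_pos)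
    rw [rank_range_zero] at h
    exact eq_zero_of_rank_range_eq_zero h
  have hP'rank : Module.rank ℂ (LinearMap.range ((φ P : H →L[ℂ] H) : H →ₗ[ℂ] H)) = 1 := by
    have h := hrank P hPsa hPP (by rw [hPrank]; exact Cardinal.one_lt_aleph0)
    rwa [hPrank] at h
  have hQ'rank : Module.rank ℂ (LinearMap.range ((φ Q : H →L[ℂ] H) : H →ₗ[ℂ] H)) = 1 := by
    have h := hrank Q hQsa hQQ (by rw [hQrank]; exact Cardinal.one_lt_aleph0)
    rwa [hQrank] at h
  have hR'rank : Module.rank ℂ (LinearMap.range ((φ R : H →L[ℂ] H) : H →ₗ[ℂ] H)) = 1 := by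
    have h := hrank R hRsa hRR (by rw [hRrank]; exact Cardinal.one_lt_aleph0)
    rwa [hRrank] at h
  have hPne : φ P ≠ 0 := by
    intro h; rw [h, rank_range_zero] at hP'rank; exact zero_ne_one hP'rank
  have hRne : φ R ≠ 0 := by
    intro h; rw [h, rank_range_zero] at hR'rank; exact zero_ne_one hR'rank
  -- idempotent images
  have hP'P' : φ P * φ P = φ P := by rw [← hmul, hPP]
  have hQ'Q' : φ Q * φ Q = φ Q := by rw [← hmul, hQQ]
  have hP'Q' : φ P * φ Q = 0 := by rw [← hmul, hPQ, hphi0]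
  have hQ'P' : φ Q * φ P = 0 := by rw [← hmul, hQP, hphi0]
  have hEP' : φ (P + Q) * φ P = φ P := by rw [← hmul, hPQP]
  have hEQ' : φ (P + Q) * φ Q = φ Q := by rw [← hmul, hPQQ]
  have hP'E : φ P * φ (P + Q) = φ P := by rw [← hmul, hPPQ]
  have hQ'E : φ Q * φ (P + Q) = φ Q := by rw [← hmul, hQPQ]
  have hEE : φ (P + Q) * φ (P + Q) = φ (P + Q) := by rw [← hmul, hPQPQ]
  -- additivity of φ on the orthogonal pair of projections
  have hSS : (φ P + φ Q) * (φ P + φ Q) = φ P + φ Q := by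
    rw [mul_add, add_mul, add_mul, hP'P', hQ'P', hP'Q', hQ'Q', add_zero, zero_add]
  have hES : φ (P + Q) * (φ P + φ Q) = φ P + φ Q := by rw [mul_add, hEP', hEQ']
  have hSE : (φ P + φ Q) * φ (P + Q) = φ P + φ Q := by rw [add_mul, hP'E, hQ'E]
  set T : H →L[ℂ] H := φ (P + Q) - (φ P + φ Q) with hTdef
  have hTT : T * T = T := by
    rw [hTdef, sub_mul, mul_sub, mul_sub, hEE, hES, hSE, hSS]; abel
  have hST : (φ P + φ Q) * T = 0 := by rw [hTdef, mul_sub, hSE, hSS, sub_self]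
  have hTS : T * (φ P + φ Q) = 0 := by rw [hTdef, sub_mul, hES, hSS, sub_self]
  have hEqST : φ (P + Q) = (φ P + φ Q) + T := by rw [hTdef]; abel
  have hErank : Module.rank ℂ (LinearMap.range ((φ (P + Q) : H →L[ℂ] H) : H →ₗ[ℂ] H))
      = 1 + 1 := by
    have hlt : (1 + 1 : Cardinal) < Cardinal.aleph0 :=
      Cardinal.add_lt_aleph0 Cardinal.one_lt_aleph0 Cardinal.one_lt_aleph0
    have h := hrank (P + Q) hPQsa hPQPQ (by rw [hPQrank]; exact hlt)
    rwa [hPQrank] at h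
  have hSrank : Module.rank ℂ (LinearMap.range ((φ P + φ Q : H →L[ℂ] H) : H →ₗ[ℂ] H))
      = 1 + 1 := by
    rw [rank_range_add _ _ hP'P' hQ'Q' hP'Q' hQ'P', hP'rank, hQ'rank]
  have hTzero : T = 0 := by
    have h := rank_range_add (φ P + φ Q) T hSS hTT hST hTS
    rw [← hEqST, hErank, hSrank] at h
    have h2 : (1 + 1 : Cardinal) + Module.rank ℂ (LinearMap.range (T : H →ₗ[ℂ] H))
        = (1 + 1 : Cardinal) + 0 := by rw [add_zero, ← h]
    have h3 := Cardinal.eq_of_add_eq_add_left h2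
      (Cardinal.add_lt_aleph0 Cardinal.one_lt_aleph0 Cardinal.one_lt_aleph0)
    exact eq_zero_of_rank_range_eq_zero h3
  have hE : φ (P + Q) = φ P + φ Q := by rw [hEqST, hTzero, add_zero]
  -- scalar behaviour
  have hfP := hf P hPrank
  have hfR := hf R hRrank
  have hf1 : f 1 = 1 := by
    have h := hfP 1
    rw [one_smul] at h
    exact (stmt19_smul_cancel (by rw [one_smul, ← h]) hPne).symm
  have hfmul : ∀ a b : ℂ, f (a * b) = f a * f b := by
    intro a b
    have h2 : (a • P) * (b • P) = (a * b) • P := by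
      rw [smul_mul_assoc, mul_smul_comm, hPP, smul_smul]
    have h3 : φ ((a * b) • P) = (f a * f b) • φ P := by
      rw [← h2, hmul, hfP, hfP, smul_mul_assoc, mul_smul_comm, hP'P', smul_smul]
    exact stmt19_smul_cancel ((hfP (a * b)).symm.trans h3) hPne
  -- continuity of f
  have hfcont : Continuous f := by
    obtain ⟨v0, hv0'⟩ : ∃ v0, φ P v0 ≠ 0 := by
      by_contra h
      push_neg at h
      exact hPne (ContinuousLinearMap.ext fun u => by
        rw [h u, ContinuousLinearMap.zero_apply])
    have hw0 : ‖φ P v0‖ ≠ 0 := norm_ne_zero_iff.mpr hv0'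
    have hfe : ∀ lam : ℂ, f lam = ⟪φ P v0, φ (lam • P) v0⟫ * ((‖φ P v0‖ : ℂ) ^ 2)⁻¹ := by
      intro lam
      rw [hfP lam, ContinuousLinearMap.smul_apply, inner_smul_right, inner_self_eq_norm_sq_to_K]
      have hne : ((‖φ P v0‖ : ℂ)) ^ 2 ≠ 0 := pow_ne_zero _ (Complex.ofReal_ne_zero.mpr hw0)
      field_simp
      exact (mul_div_cancel_right₀ _ hne).symm
    have c1 : Continuous fun lam : ℂ => φ (lam • P) :=
      hcont.comp (continuous_id.smul continuous_const)
    have c2 : Continuous fun lam : ℂ => φ (lam • P) v0 := c1.clm_apply continuous_const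
    have c3 : Continuous fun lam : ℂ =>
        ⟪φ P v0, φ (lam • P) v0⟫ * ((‖φ P v0‖ : ℂ) ^ 2)⁻¹ :=
      (continuous_const.inner c2).mul continuous_const
    exact c3.congr fun lam => (hfe lam).symm
  -- additivity of f
  have hfadd : ∀ a b : ℂ, f (a + b) = f a + f b := by
    intro a b
    set D : H →L[ℂ] H := a • P + b • Q with hDdef
    have hPQD : (P + Q) * D = D := by
      rw [hDdef, mul_add, mul_smul_comm, mul_smul_comm, hPQP, hPQQ]
    have hDwx : D * rk1 w x = a • rk1 w x := by
      rw [hDdef, add_mul, smul_mul_assoc, smul_mul_assoc, hPwx, hQwx, smul_zero, add_zero]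
    have hDwy : D * rk1 w y = b • rk1 w y := by
      rw [hDdef, add_mul, smul_mul_assoc, smul_mul_assoc, hPwy, hQwy, smul_zero, zero_add]
    have hDPR : D * (P * R) = ((2:ℂ)⁻¹ * a) • rk1 w x := by
      rw [hPR, mul_smul_comm, hDwx, smul_smul]
    have hDQR : D * (Q * R) = ((2:ℂ)⁻¹ * b) • rk1 w y := by
      rw [hQR, mul_smul_comm, hDwy, smul_smul]
    have hTPP : R * (P * (D * (P * R))) = ((2:ℂ)⁻¹ * a) • R := by
      rw [hDPR, mul_smul_comm, hPwx, mul_smul_comm, hRwx]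
    have hTQQ : R * (Q * (D * (Q * R))) = ((2:ℂ)⁻¹ * b) • R := by
      rw [hDQR, mul_smul_comm, hQwy, mul_smul_comm, hRwy]
    have hTPQ : R * (P * (D * (Q * R))) = 0 := by
      rw [hDQR, mul_smul_comm, hPwy, smul_zero, mul_zero]
    have hTQP : R * (Q * (D * (P * R))) = 0 := by
      rw [hDPR, mul_smul_comm, hQwx, smul_zero, mul_zero]
    have hDR : D * R = ((2:ℂ)⁻¹ * a) • rk1 w x + ((2:ℂ)⁻¹ * b) • rk1 w y := by
      rw [hDdef, add_mul, smul_mul_assoc, smul_mul_assoc, hPR, hQR, smul_smul, smul_smul,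
        mul_comm a ((2:ℂ)⁻¹), mul_comm b ((2:ℂ)⁻¹)]
    have hRDR : R * (D * R) = ((2:ℂ)⁻¹ * (a + b)) • R := by
      rw [hDR, mul_add, mul_smul_comm, mul_smul_comm, hRwx, hRwy, ← add_smul]
      congr 1; ring
    have hop : R * ((P + Q) * (D * ((P + Q) * R))) = R * (D * R) := by
      have h' : (P + Q) * (D * ((P + Q) * R)) = D * R := by
        rw [hPQR, ← mul_assoc, hPQD]
      rw [h']
    have hchain : ∀ X Y : H →L[ℂ] H,
        φ (R * (X * (D * (Y * R)))) = φ R * (φ X * (φ D * (φ Y * φ R))) := by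
      intro X Y; rw [hmul, hmul, hmul, hmul]
    have expand : φ R * ((φ P + φ Q) * (φ D * ((φ P + φ Q) * φ R))) =
        φ R * (φ P * (φ D * (φ P * φ R))) + φ R * (φ P * (φ D * (φ Q * φ R))) +
          φ R * (φ Q * (φ D * (φ P * φ R))) + φ R * (φ Q * (φ D * (φ Q * φ R))) := by
      noncomm_ring
    have way2 : φ (R * (D * R)) = (f ((2:ℂ)⁻¹ * a) + f ((2:ℂ)⁻¹ * b)) • φ R := by
      rw [← hop, hchain, hE, expand, ← hchain, ← hchain, ← hchain, ← hchain, hTPP, hTQQ,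
        hTPQ, hTQP, hphi0, hfR, hfR, add_zero, add_zero, ← add_smul]
    have way1 : φ (R * (D * R)) = f ((2:ℂ)⁻¹ * (a + b)) • φ R := by rw [hRDR, hfR]
    have h2 : f ((2:ℂ)⁻¹ * (a + b)) = f ((2:ℂ)⁻¹ * a) + f ((2:ℂ)⁻¹ * b) :=
      stmt19_smul_cancel (way1.symm.trans way2) hRne
    rw [hfmul, hfmul, hfmul] at h2
    have hfhalf : f ((2:ℂ)⁻¹) ≠ 0 := by
      intro h0
      have h := hfmul ((2:ℂ)⁻¹) 2
      rw [h0, zero_mul, show ((2:ℂ)⁻¹ * 2) = 1 by norm_num, hf1] at h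
      exact one_ne_zero h
    exact mul_left_cancel₀ hfhalf (by rw [h2, mul_add])
  have hf0 : f 0 = 0 := by
    have h := hfadd 0 0
    rw [add_zero] at h
    exact (left_eq_add.mp h)
  refine ⟨hfcont, hfmul, hf1, hfadd, ?_⟩
  let F : ℂ →+* ℂ :=
    { toFun := f, map_one' := hf1, map_mul' := fun a b => hfmul a b,
      map_zero' := hf0, map_add' := fun a b => hfadd a b }
  have hFc : Continuous F := hfcont
  rcases Complex.ringHom_eq_id_or_conj_of_continuous hFc with h | h
  · left; intro z; exact RingHom.congr_fun h z
  · right; intro z; exact RingHom.congr_fun h z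
end
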